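/- Suppose the eigenvalues of a positive compact self-adjoint operator S satisfy t_l ≤ C l^{-b} for all l ≥ 1, where b > 1 and C > 0. Then there exists a constant C_b > 0 (depending only on b and C) such that for all 0 < λ ≤ C, N(λ) := Σ_{l=1}^∞ t_l/(t_l + λ) ≤ C_b λ^{-1/b}. -/

import Mathlib

/-!
Split `N(λ)` at `n ≈ (C/λ)^(1/b)`. Each term `t_l/(t_l+λ)` is at most `1`, so the head contributes
at most `n`; in the tail each term is at most `(C/λ) l^(-b)`, and comparing `l^(-b)` with the
telescoping differences of `l^(1-b)/(b-1)` (Bernoulli's inequality) bounds the tail by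
`(C/λ) n^(1-b)/(b-1) ≤ n/(b-1)`.
-/

open Finset

lemma sub_one_mul_rpow_neg_le_rpow_sub_rpow {b x : ℝ} (hb : 1 ≤ b) (hx : 0 < x) :
    (b - 1) * (x + 1) ^ (-b) ≤ x ^ (1 - b) - (x + 1) ^ (1 - b) := by
  have hx1 : 0 < x + 1 := by linarith
  have hbern : 1 + b * x⁻¹ ≤ (1 + x⁻¹) ^ b :=
    one_add_mul_self_le_rpow_one_add (by linarith [inv_pos.mpr hx]) hb
  have key : x + b ≤ (x + 1) ^ b * x ^ (1 - b) := by
    have hsplit : (x + 1) ^ b * x ^ (1 - b) = x * (1 + x⁻¹) ^ b := by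
      rw [show 1 + x⁻¹ = (x + 1) / x by field_simp, Real.div_rpow hx1.le hx.le,
        Real.rpow_sub hx, Real.rpow_one]
      field_simp
    calc x + b = x * (1 + b * x⁻¹) := by field_simp
      _ ≤ (x + 1) ^ b * x ^ (1 - b) := hsplit ▸ mul_le_mul_of_nonneg_left hbern hx.le
  have hpow : 0 < (x + 1) ^ b := Real.rpow_pos_of_pos hx1 b
  calc (b - 1) * (x + 1) ^ (-b) = (x + b) / (x + 1) ^ b - (x + 1) ^ (1 - b) := by
        rw [Real.rpow_sub hx1, Real.rpow_one, Real.rpow_neg hx1.le]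
        field_simp
        ring
    _ ≤ x ^ (1 - b) - (x + 1) ^ (1 - b) := by
        gcongr
        exact (div_le_iff₀' hpow).mpr key

lemma sum_range_add_one_rpow_neg_le {b x : ℝ} (hb : 1 < b) (hx : 0 < x) (n : ℕ) :
    ∑ i ∈ range n, ((i : ℝ) + x + 1) ^ (-b) ≤ x ^ (1 - b) / (b - 1) := by
  have hb1 : 0 < b - 1 := by linarith
  set g : ℕ → ℝ := fun i => ((i : ℝ) + x) ^ (1 - b)
  have hterm (i : ℕ) : ((i : ℝ) + x + 1) ^ (-b) ≤ (g i - g (i + 1)) / (b - 1) := by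
    rw [le_div_iff₀ hb1, mul_comm]
    simpa [g, add_right_comm _ (1 : ℝ)] using
      sub_one_mul_rpow_neg_le_rpow_sub_rpow hb.le (by positivity : 0 < (i : ℝ) + x)
  calc ∑ i ∈ range n, ((i : ℝ) + x + 1) ^ (-b)
      ≤ ∑ i ∈ range n, (g i - g (i + 1)) / (b - 1) := sum_le_sum fun i _ => hterm i
    _ = (g 0 - g n) / (b - 1) := by rw [← sum_div, sum_range_sub']
    _ ≤ g 0 / (b - 1) := by
        gcongr
        exact sub_le_self _ (Real.rpow_nonneg (by positivity) _)
    _ = x ^ (1 - b) / (b - 1) := by simp [g]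

lemma tsum_le_of_le_one_of_le_mul_rpow_neg {f : ℕ → ℝ} {A b : ℝ} (hb : 1 < b) (hA : 1 ≤ A)
    (hf0 : ∀ l, 0 ≤ f l) (hf1 : ∀ l, f l ≤ 1) (hfA : ∀ l : ℕ, f l ≤ A * ((l : ℝ) + 1) ^ (-b)) :
    ∑' l, f l ≤ (2 + 1 / (b - 1)) * A ^ (1 / b) := by
  have hA0 : 0 < A := by linarith
  set R := A ^ (1 / b)
  have hR1 : 1 ≤ R := Real.one_le_rpow hA (by positivity)
  set N := ⌈R⌉₊
  have hNR : R ≤ N := Nat.le_ceil R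
  have hN2R : (N : ℝ) ≤ 2 * R := by linarith [Nat.ceil_lt_add_one (by linarith : 0 ≤ R)]
  have hN0 : (0 : ℝ) < N := by linarith
  have hsummable : Summable f := by
    refine Summable.of_nonneg_of_le hf0 hfA (Summable.mul_left A ?_)
    exact_mod_cast (summable_nat_add_iff 1).mpr (Real.summable_nat_rpow.mpr (by linarith))
  have hhead : ∑ i ∈ range N, f i ≤ N := by
    simpa using sum_le_sum fun i (_ : i ∈ range N) => hf1 i
  have htail : ∑' i, f (i + N) ≤ A * (N ^ (1 - b) / (b - 1)) := by
    refine Real.tsum_le_of_sum_range_le (fun i => hf0 _) fun n => ?_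
    calc ∑ i ∈ range n, f (i + N) ≤ ∑ i ∈ range n, A * ((i : ℝ) + N + 1) ^ (-b) :=
          sum_le_sum fun i _ => by exact_mod_cast hfA (i + N)
      _ ≤ A * (N ^ (1 - b) / (b - 1)) := by
          rw [← mul_sum]
          exact mul_le_mul_of_nonneg_left (sum_range_add_one_rpow_neg_le hb hN0 n) hA0.le
  have hAR : A * R ^ (1 - b) = R := by
    rw [← Real.rpow_mul hA0.le, show 1 / b * (1 - b) = 1 / b - 1 by field_simp,
      Real.rpow_sub_one hA0.ne', mul_div_cancel₀ _ hA0.ne']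
  have htail' : A * (N ^ (1 - b) / (b - 1)) ≤ R / (b - 1) := by
    calc A * (N ^ (1 - b) / (b - 1)) ≤ A * (R ^ (1 - b) / (b - 1)) := by
          gcongr A * (?_ / _)
          exact Real.rpow_le_rpow_of_nonpos (by linarith) hNR (by linarith)
      _ = R / (b - 1) := by rw [← mul_div_assoc, hAR]
  calc ∑' l, f l = ∑ i ∈ range N, f i + ∑' i, f (i + N) := (hsummable.sum_add_tsum_nat_add N).symm
    _ ≤ 2 * R + R / (b - 1) := by linarith
    _ = (2 + 1 / (b - 1)) * R := by ring

/-- If the (nonnegative, nonincreasing) eigenvalues satisfy `t l ≤ C * l ^ (-b)` for all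
`l ≥ 1` with `b > 1`, `C > 0`, then there is a constant `C_b > 0` such that for all
`0 < lam ≤ C`, the effective dimension `N(lam) = ∑_{l≥1} t l / (t l + lam)` is at most
`C_b * lam ^ (-1/b)`.  (Here `t : ℕ → ℝ` with `t l` the `(l+1)`-st eigenvalue.) -/
theorem stmt8 (t : ℕ → ℝ) (b C : ℝ) (hb : 1 < b) (hC : 0 < C)
    (htnn : ∀ l, 0 ≤ t l)
    (hdecay : ∀ l : ℕ, 1 ≤ l → t (l - 1) ≤ C * (l : ℝ) ^ (-b)) :
    ∃ Cb : ℝ, 0 < Cb ∧ ∀ lam : ℝ, 0 < lam → lam ≤ C →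
      ∑' l : ℕ, t l / (t l + lam) ≤ Cb * lam ^ (-(1 / b)) := by
  refine ⟨(2 + 1 / (b - 1)) * C ^ (1 / b), by positivity, fun lam hlam hlamC => ?_⟩
  have hden (l : ℕ) : 0 < t l + lam := by linarith [htnn l]
  have hdecay' (l : ℕ) : t l ≤ C * ((l : ℝ) + 1) ^ (-b) := by
    simpa using hdecay (l + 1) (Nat.le_add_left 1 l)
  have hbound := tsum_le_of_le_one_of_le_mul_rpow_neg (f := fun l => t l / (t l + lam))
    (A := C / lam) hb ((one_le_div hlam).mpr hlamC)
    (fun l => div_nonneg (htnn l) (hden l).le)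
    (fun l => div_le_one_of_le₀ (by linarith) (hden l).le)
    (fun l => calc t l / (t l + lam) ≤ t l / lam := by gcongr <;> linarith [htnn l]
      _ ≤ C * ((l : ℝ) + 1) ^ (-b) / lam := by gcongr; exact hdecay' l
      _ = C / lam * ((l : ℝ) + 1) ^ (-b) := by ring)
  rwa [Real.rpow_neg hlam.le, mul_assoc, ← div_eq_mul_inv, ← Real.div_rpow hC.le hlam.le]
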